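/- Let v₁ = (0,0,0), v₂ = (1000,0,0), v₃ = (463,843,0), v₄ = (749,−85,237), v₅ = (−55,−97,−358), v₆ = (304,580,284), v₇ = (−409,518,−414), v₈ = (237,−206,−171), v₉ = (530,717,80), v₁₀ = (122,560,−819) in ℝ³, and define edge vectors eᵢ = v_{i+1} − vᵢ for i = 1, …, 9 and e₁₀ = v₁ − v₁₀. Then there is no w ∈ ℝ³ such that (−1)^{i+1} (w · eᵢ) > 0 for every i ∈ {1, …, 10}. -/

import Mathlib

/-- The vertices of the paper's 10-stick polygonal realization of the knot `8_12`.
Here `vert8_12 i` is the paper's vertex `v_(i+1)`. -/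
noncomputable def vert8_12 : Fin 10 → (Fin 3 → ℝ) :=
  ![![0, 0, 0], ![1000, 0, 0], ![463, 843, 0], ![749, -85, 237], ![-55, -97, -358], ![304, 580, 284], ![-409, 518, -414], ![237, -206, -171], ![530, 717, 80], ![122, 560, -819]]

/-- The edge vectors `eᵢ = v_(i+1) − vᵢ` (cyclically, so `e₁₀ = v₁ − v₁₀`);
here `edge8_12 i` is the paper's `e_(i+1)`, using wrap-around addition on `Fin 10`. -/
noncomputable def edge8_12 (i : Fin 10) : Fin 3 → ℝ :=
  vert8_12 (i + 1) - vert8_12 i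

/-! Gordan's alternative: a direction `w` pairing positively with the signed edges `(-1)^i eᵢ`
is ruled out by a vanishing combination of them with nonnegative, not all zero, coefficients.
Four signed edges already suffice, those with `i = 0, 4, 7, 8`. -/

open Matrix

theorem not_exists_forall_pos_dotProduct_of_sum_smul_eq_zero {R ι m : Type*} [Field R]
    [LinearOrder R] [IsStrictOrderedRing R] [Fintype ι] [Fintype m] (u : ι → m → R) (c : ι → R)
    (hc : 0 ≤ c) (hc₀ : c ≠ 0) (hcomb : ∑ i, c i • u i = 0) :
    ¬ ∃ w : m → R, ∀ i, 0 < w ⬝ᵥ u i := by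
  rintro ⟨w, hw⟩
  obtain ⟨k, hk⟩ : ∃ k, c k ≠ 0 := Function.ne_iff.mp hc₀
  have hpos : 0 < ∑ i, c i * (w ⬝ᵥ u i) :=
    Finset.sum_pos' (fun i _ => mul_nonneg (hc i) (hw i).le)
      ⟨k, Finset.mem_univ k, mul_pos ((hc k).lt_of_ne' hk) (hw k)⟩
  have hzero : ∑ i, c i * (w ⬝ᵥ u i) = 0 := by
    simp_rw [← smul_eq_mul, ← dotProduct_smul, ← dotProduct_sum, hcomb, dotProduct_zero]
  exact hpos.ne' hzero

/-- The entries at `0, 4, 7, 8` are the signed `3 × 3` minors of those four signed edges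
(Cramer's rule), divided by their gcd. -/
def gordanCoeff8_12 : Fin 10 → ℝ :=
  ![5355397, 0, 0, 0, 112910000, 0, 0, 72547000, 60377000, 0]

theorem gordanCoeff8_12_nonneg : 0 ≤ gordanCoeff8_12 := by
  intro i
  fin_cases i <;> simp [gordanCoeff8_12]

theorem gordanCoeff8_12_ne_zero : gordanCoeff8_12 ≠ 0 :=
  Function.ne_iff.mpr ⟨0, by simp [gordanCoeff8_12]⟩

theorem sum_gordanCoeff8_12_smul_signed_edge_eq_zero :
    ∑ i, gordanCoeff8_12 i • ((-1 : ℝ) ^ (i : ℕ) • edge8_12 i) = 0 := by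
  ext j
  fin_cases j <;> simp [Fin.sum_univ_succ, gordanCoeff8_12, edge8_12, vert8_12] <;> norm_num

/-- There is no `w ∈ ℝ³` such that `(−1)^(i+1) (w · eᵢ) > 0` for every
`i ∈ {1, …, 10}`: no projection of this polygon (the knot `8_12`) to a line has
5 local maxima. (With 0-based indexing `i : Fin 10`, the sign is `(−1)^i`.) -/
theorem no_alternating_direction_8_12 :
    ¬ ∃ w : Fin 3 → ℝ, ∀ i : Fin 10,
        0 < (-1 : ℝ) ^ (i : ℕ) * ∑ j : Fin 3, w j * edge8_12 i j := by
  simp_rw [← dotProduct.eq_1, ← smul_eq_mul, ← dotProduct_smul]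
  exact not_exists_forall_pos_dotProduct_of_sum_smul_eq_zero _ _ gordanCoeff8_12_nonneg
    gordanCoeff8_12_ne_zero sum_gordanCoeff8_12_smul_signed_edge_eq_zero
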